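/- If A ~ B in a unital C*-algebra, A is normal, and f : ℂ → ℂ is continuous, then f(A) ~ f(B), where f(A) and f(B) are defined via continuous functional calculus (B being normal with the same spectrum as A). -/

import Mathlib

/-!
Write `U a U*` as the image of `a` under the star algebra automorphism `Ad U`. Star algebra
homomorphisms commute with the continuous functional calculus, so `U f(a) U* = f(U a U*)`.
The elements `U_n a U_n*` are normal with spectrum that of `a`, and they converge to `b`, which is
therefore normal as well. Since `cfc f` is continuous on the normal elements whose spectrum lies in
a fixed compact set (here `σ(a) ∪ σ(b)`), `f(U_n a U_n*) → f(b)`.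
-/

open Filter

/-- Approximate unitary equivalence in a unital C*-algebra. -/
def ApproxUnitaryEquiv {A : Type*} [CStarAlgebra A] (a b : A) : Prop :=
  ∃ U : ℕ → unitary A,
    Tendsto (fun n => ‖(U n : A) * a * star (U n : A) - b‖) atTop (nhds 0)

open Topology

theorem isClosed_setOf_isStarNormal {R : Type*} [Monoid R] [StarMul R] [TopologicalSpace R]
    [ContinuousMul R] [ContinuousStar R] [T2Space R] :
    IsClosed {x : R | IsStarNormal x} := by
  have h : {x : R | IsStarNormal x} = {x | star x * x = x * star x} := by
    ext x
    exact ⟨fun hx => hx.star_comm_self.eq, fun hx => ⟨hx⟩⟩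
  rw [h]
  exact isClosed_eq (by fun_prop) (by fun_prop)

theorem approxUnitaryEquiv_iff_tendsto {A : Type*} [CStarAlgebra A] {a b : A} :
    ApproxUnitaryEquiv a b ↔
      ∃ U : ℕ → unitary A, Tendsto (fun n => Unitary.conjStarAlgAut ℂ A (U n) a) atTop (𝓝 b) :=
  exists_congr fun _ => tendsto_iff_norm_sub_tendsto_zero.symm

theorem Unitary.conjStarAlgAut_cfc {A : Type*} [CStarAlgebra A] (u : unitary A) (f : ℂ → ℂ)
    (a : A) [IsStarNormal a] :
    conjStarAlgAut ℂ A u (cfc f a) = cfc f (conjStarAlgAut ℂ A u a) := by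
  by_cases hf : ContinuousOn f (spectrum ℂ a)
  · exact StarAlgHomClass.map_cfc (S := ℂ) (conjStarAlgAut ℂ A u) f a
      (hφ := by change Continuous fun z : A => (u : A) * z * star (u : A); fun_prop)
  · rw [cfc_apply_of_not_continuousOn a hf, cfc_apply_of_not_continuousOn _ (by simpa using hf),
      map_zero]

theorem approxUnitaryEquiv_cfc {A : Type*} [CStarAlgebra A]
    {a b : A} (h : ApproxUnitaryEquiv a b) (ha : IsStarNormal a)
    (f : ℂ → ℂ) (hf : Continuous f) :
    ApproxUnitaryEquiv (cfc f a) (cfc f b) := by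
  obtain ⟨U, hU⟩ := approxUnitaryEquiv_iff_tendsto.mp h
  have hb : IsStarNormal b :=
    isClosed_setOf_isStarNormal.mem_of_tendsto hU (.of_forall fun _ => ha.map _)
  refine approxUnitaryEquiv_iff_tendsto.mpr ⟨U, ?_⟩
  simp only [Unitary.conjStarAlgAut_cfc]
  exact hU.cfc ((spectrum.isCompact a).union (spectrum.isCompact b)) f
    (.of_forall fun _ => by simp) (.of_forall fun _ => ha.map _) Set.subset_union_right hb
    hf.continuousOn
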